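/- arXiv:1909.08666 — 3 statements merged into one kernel-verified Lean document; each statement's English description precedes it below -/
import Mathlib

section
/- Suppose Π is a bounded positive self-adjoint operator on L² such that Π = B*B + R where B is an elliptic pseudodifferential operator of order −1/2 admitting a left parametrix Q of order 1/2 with QB = Id + R' (R' smoothing, R of order −2), and the operator Π restricted to a closed subspace (solenoidal tensors) is injective. Then there exists C > 0 such that ⟨Π h, h⟩ ≥ C ‖h‖²_{H^{−1/2}} for all h in that subspace. (Coercivity from ellipticity, injectivity, and a compactness/contradiction argument.) -/
open scoped RealInnerProductSpace
open Filter Topology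

set_option maxHeartbeats 2000000 in
/-- coercivity of the variance operator: if `⟨Πh,h⟩ = ‖Bh‖² + ⟨Rh,h⟩`
with `B` elliptic (satisfying the estimate `‖h‖ ≤ C₀(‖Bh‖ + ‖R'h‖)` with `R, R'`
compact), `Π ≥ 0`, and `Π` is injective on the closed subspace `V` of solenoidal
tensors, then `⟨Πh,h⟩ ≥ C‖h‖²_{H^{-1/2}}` on `V`. -/
theorem stmt_12 {E F : Type*}
    [NormedAddCommGroup E] [InnerProductSpace ℝ E] [CompleteSpace E]
    [NormedAddCommGroup F] [InnerProductSpace ℝ F] [CompleteSpace F]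
    (B : E →L[ℝ] F) (R R' : E →L[ℝ] E)
    (hR : IsCompactOperator R) (hR' : IsCompactOperator R')
    (hRsa : ∀ x y : E, ⟪R x, y⟫ = ⟪x, R y⟫)
    (hpos : ∀ h : E, 0 ≤ ‖B h‖ ^ 2 + ⟪R h, h⟫)
    (C₀ : ℝ) (hC₀ : 0 < C₀)
    (helliptic : ∀ h : E, ‖h‖ ≤ C₀ * (‖B h‖ + ‖R' h‖))
    (V : Submodule ℝ E) (hV : IsClosed (V : Set E))
    (hinj : ∀ h ∈ V, ‖B h‖ ^ 2 + ⟪R h, h⟫ = 0 → h = 0) :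
    ∃ C > 0, ∀ h ∈ V, C * ‖h‖ ^ 2 ≤ ‖B h‖ ^ 2 + ⟪R h, h⟫ := by
  by_contra hcon
  push_neg at hcon
  set q : E → ℝ := fun h => ‖B h‖ ^ 2 + ⟪R h, h⟫ with hqdef
  -- symmetry of the R-part
  have bsym : ∀ h k : E, ⟪R k, h⟫ = ⟪R h, k⟫ := fun h k => by
    rw [hRsa k h, real_inner_comm]
  -- expansion of q on differences
  have qexpand_sub : ∀ h k : E,
      q (h - k) = q h + q k - 2 * (⟪B h, B k⟫ + ⟪R h, k⟫) := by
    intro h k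
    have hin : ⟪R (h - k), h - k⟫ = ⟪R h, h⟫ + ⟪R k, k⟫ - 2 * ⟪R h, k⟫ := by
      rw [map_sub, inner_sub_left, inner_sub_right, inner_sub_right, bsym h k]
      ring
    simp only [hqdef, map_sub]
    rw [norm_sub_sq_real]
    rw [map_sub] at hin
    rw [hin]
    ring
  -- expansion of q on h + t • k
  have qexpand_add : ∀ h k : E, ∀ t : ℝ,
      q (h + t • k) = q k * (t * t) + (2 * (⟪B h, B k⟫ + ⟪R h, k⟫)) * t + q h := by
    intro h k t
    simp only [hqdef, map_add, map_smul]
    rw [← real_inner_self_eq_norm_sq, ← real_inner_self_eq_norm_sq,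
      ← real_inner_self_eq_norm_sq]
    simp only [inner_add_left, inner_add_right, real_inner_smul_left,
      real_inner_smul_right]
    rw [real_inner_comm (B k) (B h), bsym h k]
    ring
  -- Cauchy–Schwarz for the nonnegative quadratic form
  have CS : ∀ h k : E, (⟪B h, B k⟫ + ⟪R h, k⟫) ^ 2 ≤ q h * q k := by
    intro h k
    have hd := discrim_le_zero
      (a := q k) (b := 2 * (⟪B h, B k⟫ + ⟪R h, k⟫)) (c := q h) ?_
    · rw [discrim] at hd; nlinarith [hd]
    · intro t
      have h0 : 0 ≤ q (h + t • k) := hpos _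
      rw [qexpand_add h k t] at h0
      linarith
  have qnonneg : ∀ h : E, 0 ≤ q h := hpos
  have qsub_le : ∀ h k : E,
      q (h - k) ≤ (Real.sqrt (q h) + Real.sqrt (q k)) ^ 2 := by
    intro h k
    have h1 := CS h k
    have h2 : Real.sqrt (q h) ^ 2 = q h := Real.sq_sqrt (qnonneg h)
    have h3 : Real.sqrt (q k) ^ 2 = q k := Real.sq_sqrt (qnonneg k)
    have habs : |⟪B h, B k⟫ + ⟪R h, k⟫| ≤ Real.sqrt (q h) * Real.sqrt (q k) := by
      have h4 := Real.sqrt_le_sqrt h1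
      rwa [Real.sqrt_sq_eq_abs, Real.sqrt_mul (qnonneg h)] at h4
    rw [qexpand_sub h k]
    nlinarith [habs, neg_abs_le (⟪B h, B k⟫ + ⟪R h, k⟫),
      Real.sqrt_nonneg (q h), Real.sqrt_nonneg (q k)]
  -- extract the minimizing sequence
  have hseq : ∀ n : ℕ, ∃ h ∈ V, q h < (1 / (n + 1 : ℝ)) * ‖h‖ ^ 2 := by
    intro n
    exact hcon (1 / (n + 1 : ℝ)) (by positivity)
  choose u huV huq using hseq
  have hu0 : ∀ n, u n ≠ 0 := by
    intro n hn
    have h1 := huq n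
    rw [hn] at h1
    simp [hqdef, inner_zero_right] at h1
  set w : ℕ → E := fun n => ‖u n‖⁻¹ • u n with hwdef
  have hwnorm : ∀ n, ‖w n‖ = 1 := fun n => norm_smul_inv_norm (hu0 n)
  have hwV : ∀ n, w n ∈ V := fun n => V.smul_mem _ (huV n)
  have hqscale : ∀ (c : ℝ) (h : E), q (c • h) = c ^ 2 * q h := by
    intro c h
    simp only [hqdef, map_smul, norm_smul, real_inner_smul_left, real_inner_smul_right,
      mul_pow, sq_abs, Real.norm_eq_abs]
    ring
  have hwq : ∀ n, q (w n) < 1 / (n + 1 : ℝ) := by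
    intro n
    have hn0 : 0 < ‖u n‖ := norm_pos_iff.mpr (hu0 n)
    have h1 := huq n
    have h2 : (‖u n‖⁻¹) ^ 2 * q (u n) < (‖u n‖⁻¹) ^ 2 * ((1 / (n + 1 : ℝ)) * ‖u n‖ ^ 2) :=
      mul_lt_mul_of_pos_left h1 (by positivity)
    have h3 : (‖u n‖⁻¹) ^ 2 * ((1 / (n + 1 : ℝ)) * ‖u n‖ ^ 2) = 1 / (n + 1 : ℝ) := by
      field_simp
    rw [hwdef]
    simp only
    rw [hqscale]
    linarith
  have hqlim : Tendsto (fun n => q (w n)) atTop (𝓝 0) := by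
    have hub : Tendsto (fun n : ℕ => 1 / (n + 1 : ℝ)) atTop (𝓝 0) :=
      tendsto_one_div_add_atTop_nhds_zero_nat
    exact tendsto_of_tendsto_of_tendsto_of_le_of_le tendsto_const_nhds hub
      (fun n => qnonneg (w n)) (fun n => (hwq n).le)
  -- compactness: extract subsequences making R ∘ w and R' ∘ w converge
  obtain ⟨K, hK, hKsub⟩ :=
    hR.image_closedBall_subset_compact (f := (R : E →ₗ[ℝ] E)) 1
  have hmemK : ∀ n, R (w n) ∈ K := by
    intro n
    exact hKsub ⟨w n, by simp [Metric.mem_closedBall, dist_zero_right, hwnorm n], rfl⟩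
  obtain ⟨z, -, φ, hφ, hzlim⟩ := hK.tendsto_subseq hmemK
  obtain ⟨K', hK', hK'sub⟩ :=
    hR'.image_closedBall_subset_compact (f := (R' : E →ₗ[ℝ] E)) 1
  have hmemK' : ∀ n, R' (w (φ n)) ∈ K' := by
    intro n
    exact hK'sub ⟨w (φ n), by simp [Metric.mem_closedBall, dist_zero_right, hwnorm _], rfl⟩
  obtain ⟨z', -, ψ, hψ, hz'lim⟩ := hK'.tendsto_subseq hmemK'
  set v : ℕ → E := fun n => w (φ (ψ n)) with hvdef
  have hvV : ∀ n, v n ∈ V := fun n => hwV _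
  have hvnorm : ∀ n, ‖v n‖ = 1 := fun n => hwnorm _
  have hvq : Tendsto (fun n => q (v n)) atTop (𝓝 0) :=
    hqlim.comp ((hφ.comp hψ).tendsto_atTop)
  have hvR : Tendsto (fun n => R (v n)) atTop (𝓝 z) :=
    hzlim.comp hψ.tendsto_atTop
  have hvR' : Tendsto (fun n => R' (v n)) atTop (𝓝 z') := hz'lim
  -- the subsequence is Cauchy
  have hcauchy : CauchySeq v := by
    rw [Metric.cauchySeq_iff]
    intro ε hε
    set δ : ℝ := min 1 (ε ^ 2 / (25 * C₀ ^ 2 + 1)) with hδdef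
    have hδpos : 0 < δ := lt_min one_pos (by positivity)
    have hδ1 : δ ≤ 1 := min_le_left _ _
    have hδsq : δ ^ 2 ≤ δ := by
      calc δ ^ 2 = δ * δ := by ring
        _ ≤ 1 * δ := mul_le_mul_of_nonneg_right hδ1 hδpos.le
        _ = δ := one_mul δ
    obtain ⟨N₁, hN₁⟩ := (Metric.tendsto_atTop.mp hvq) (δ ^ 2) (by positivity)
    obtain ⟨N₂, hN₂⟩ := (Metric.tendsto_atTop.mp hvR) (δ / 2) (by positivity)
    obtain ⟨N₃, hN₃⟩ := (Metric.tendsto_atTop.mp hvR') (δ / 2) (by positivity)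
    refine ⟨max N₁ (max N₂ N₃), fun m hm n hn => ?_⟩
    have hm1 : N₁ ≤ m := le_trans (le_max_left _ _) hm
    have hn1 : N₁ ≤ n := le_trans (le_max_left _ _) hn
    have hm2 : N₂ ≤ m := le_trans (le_trans (le_max_left _ _) (le_max_right _ _)) hm
    have hn2 : N₂ ≤ n := le_trans (le_trans (le_max_left _ _) (le_max_right _ _)) hn
    have hm3 : N₃ ≤ m := le_trans (le_trans (le_max_right _ _) (le_max_right _ _)) hm
    have hn3 : N₃ ≤ n := le_trans (le_trans (le_max_right _ _) (le_max_right _ _)) hn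
    have qm : q (v m) < δ ^ 2 := by
      have := hN₁ m hm1
      rwa [Real.dist_eq, sub_zero, abs_of_nonneg (qnonneg _)] at this
    have qn : q (v n) < δ ^ 2 := by
      have := hN₁ n hn1
      rwa [Real.dist_eq, sub_zero, abs_of_nonneg (qnonneg _)] at this
    have sqm : Real.sqrt (q (v m)) ≤ δ := by
      have := Real.sqrt_le_sqrt qm.le
      rwa [Real.sqrt_sq hδpos.le] at this
    have sqn : Real.sqrt (q (v n)) ≤ δ := by
      have := Real.sqrt_le_sqrt qn.le
      rwa [Real.sqrt_sq hδpos.le] at this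
    have hRmn : ‖R (v m) - R (v n)‖ < δ := by
      have h1 := hN₂ m hm2
      have h2 := hN₂ n hn2
      have h3 : dist (R (v m)) (R (v n)) < δ := by
        have h4 := dist_triangle (R (v m)) z (R (v n))
        have h5 : dist z (R (v n)) = dist (R (v n)) z := dist_comm _ _
        linarith
      rwa [dist_eq_norm] at h3
    have hR'mn : ‖R' (v m) - R' (v n)‖ < δ := by
      have h1 := hN₃ m hm3
      have h2 := hN₃ n hn3
      have h3 : dist (R' (v m)) (R' (v n)) < δ := by
        have h4 := dist_triangle (R' (v m)) z' (R' (v n))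
        have h5 : dist z' (R' (v n)) = dist (R' (v n)) z' := dist_comm _ _
        linarith
      rwa [dist_eq_norm] at h3
    have hq_sub : q (v m - v n) ≤ 4 * δ ^ 2 := by
      have h1 := qsub_le (v m) (v n)
      have h2 : (Real.sqrt (q (v m)) + Real.sqrt (q (v n))) ^ 2 ≤ (2 * δ) ^ 2 := by
        have := Real.sqrt_nonneg (q (v m))
        have := Real.sqrt_nonneg (q (v n))
        nlinarith
      nlinarith
    have hvmn2 : ‖v m - v n‖ ≤ 2 := by
      have := norm_sub_le (v m) (v n)
      rw [hvnorm m, hvnorm n] at this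
      linarith
    have hB2 : ‖B (v m - v n)‖ ^ 2 ≤ 6 * δ := by
      have h1 : ‖B (v m - v n)‖ ^ 2 = q (v m - v n) - ⟪R (v m - v n), v m - v n⟫ := by
        simp only [hqdef]; ring
      have hms : R (v m - v n) = R (v m) - R (v n) := map_sub R _ _
      have h2 : |⟪R (v m - v n), v m - v n⟫| ≤ ‖R (v m) - R (v n)‖ * ‖v m - v n‖ := by
        rw [hms]; exact abs_real_inner_le_norm _ _
      have h3 : ‖R (v m) - R (v n)‖ * ‖v m - v n‖ ≤ δ * 2 :=
        mul_le_mul hRmn.le hvmn2 (norm_nonneg _) hδpos.le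
      have h4 : -⟪R (v m - v n), v m - v n⟫ ≤ δ * 2 := by
        have := neg_abs_le ⟪R (v m - v n), v m - v n⟫
        linarith
      linarith [hδsq]
    have hBle : ‖B (v m - v n)‖ ≤ 3 * Real.sqrt δ := by
      have hsq : Real.sqrt δ ^ 2 = δ := Real.sq_sqrt hδpos.le
      have h9 : ‖B (v m - v n)‖ ^ 2 ≤ (3 * Real.sqrt δ) ^ 2 := by
        have h39 : (3:ℝ) ^ 2 = 9 := by norm_num
        rw [mul_pow, hsq, h39]
        linarith [hδsq, hδpos.le]
      exact (pow_le_pow_iff_left₀ (norm_nonneg _) (by positivity) two_ne_zero).mp h9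
    have hR'le : ‖R' (v m - v n)‖ ≤ Real.sqrt δ := by
      rw [map_sub]
      have hδsqrt : δ ≤ Real.sqrt δ := by
        have h10 := Real.sqrt_le_sqrt hδsq
        rwa [Real.sqrt_sq hδpos.le] at h10
      linarith
    have hmain : ‖v m - v n‖ ≤ 4 * C₀ * Real.sqrt δ := by
      have := helliptic (v m - v n)
      have h5 : ‖B (v m - v n)‖ + ‖R' (v m - v n)‖ ≤ 4 * Real.sqrt δ := by linarith
      calc ‖v m - v n‖ ≤ C₀ * (‖B (v m - v n)‖ + ‖R' (v m - v n)‖) := this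
        _ ≤ C₀ * (4 * Real.sqrt δ) := by
            exact mul_le_mul_of_nonneg_left h5 hC₀.le
        _ = 4 * C₀ * Real.sqrt δ := by ring
    have hfinal : 4 * C₀ * Real.sqrt δ < ε := by
      have hsq : Real.sqrt δ ^ 2 = δ := Real.sq_sqrt hδpos.le
      have hδ2 : δ ≤ ε ^ 2 / (25 * C₀ ^ 2 + 1) := min_le_right _ _
      have h6 : (4 * C₀ * Real.sqrt δ) ^ 2 < ε ^ 2 := by
        have h7 : (4 * C₀ * Real.sqrt δ) ^ 2 = 16 * C₀ ^ 2 * δ := by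
          rw [mul_pow, mul_pow, hsq]; ring
        rw [h7]
        have h8 : 16 * C₀ ^ 2 * δ ≤ 16 * C₀ ^ 2 * (ε ^ 2 / (25 * C₀ ^ 2 + 1)) :=
          mul_le_mul_of_nonneg_left hδ2 (by positivity)
        have h25 : (0:ℝ) < 25 * C₀ ^ 2 + 1 := by positivity
        have h9 : 16 * C₀ ^ 2 * (ε ^ 2 / (25 * C₀ ^ 2 + 1)) < ε ^ 2 := by
          have heq : 16 * C₀ ^ 2 * (ε ^ 2 / (25 * C₀ ^ 2 + 1))
              = (16 * C₀ ^ 2 / (25 * C₀ ^ 2 + 1)) * ε ^ 2 := by ring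
          rw [heq]
          have hlt : 16 * C₀ ^ 2 / (25 * C₀ ^ 2 + 1) < 1 := by
            rw [div_lt_one h25]; nlinarith
          exact mul_lt_of_lt_one_left (by positivity) hlt
        linarith
      exact lt_of_pow_lt_pow_left₀ 2 hε.le h6
    rw [dist_eq_norm]
    calc ‖v m - v n‖ ≤ 4 * C₀ * Real.sqrt δ := hmain
      _ < ε := hfinal
  -- take the limit and derive the contradiction
  obtain ⟨L, hL⟩ := cauchySeq_tendsto_of_complete hcauchy
  have hLV : L ∈ V := hV.mem_of_tendsto hL (Filter.Eventually.of_forall hvV)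
  have hLnorm : ‖L‖ = 1 := by
    have h1 : Tendsto (fun n => ‖v n‖) atTop (𝓝 ‖L‖) := hL.norm
    have h2 : Tendsto (fun n => ‖v n‖) atTop (𝓝 1) := by
      simp only [hvnorm]
      exact tendsto_const_nhds
    exact tendsto_nhds_unique h1 h2
  have hqL : q L = 0 := by
    have hBt : Tendsto (fun n => ‖B (v n)‖ ^ 2) atTop (𝓝 (‖B L‖ ^ 2)) :=
      (((B.continuous.tendsto L).comp hL).norm).pow 2
    have hRt : Tendsto (fun n => ⟪R (v n), v n⟫) atTop (𝓝 ⟪R L, L⟫) :=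
      ((R.continuous.tendsto L).comp hL).inner hL
    have h1 : Tendsto (fun n => q (v n)) atTop (𝓝 (q L)) := by
      simp only [hqdef]
      exact hBt.add hRt
    exact tendsto_nhds_unique h1 hvq
  have hL0 : L = 0 := hinj L hLV hqL
  rw [hL0] at hLnorm
  simp at hLnorm
end

section
/- Let P : C^ν(SM) → ℝ be the topological pressure of an Anosov flow. Define Ψ(g) := P(−J^u_{g_0} − a_g + ∫ a_g dμ^L_{g_0}). Then Ψ(g) ≥ 0 for all g, with Ψ(g_0) = 0, and Ψ(g) = 0 if and only if a_g is cohomologous to a constant. The inequality follows from the variational principle: P(f) = sup_μ (h_μ + ∫ f dμ) ≥ h_{μ^L} + ∫ f dμ^L together with P(−J^u_{g_0}) = 0 and the fact that μ^L is the equilibrium state of −J^u_{g_0}; the equality case follows from uniqueness of equilibrium states and the Livsic-type characterization that two potentials with equal equilibrium states differ by a coboundary plus a constant. -/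
/-- with `Ψ(g) = P(−J^u_{g₀} − a_g + ∫ a_g dμ^L)`, one has `Ψ(g) ≥ 0`,
with equality iff `a_g` is cohomologous to a constant. Thermodynamic formalism is
abstracted: `I` is the set of invariant measures, `ent` the entropy, `integ`
integration, `Pr` the pressure (variational principle), `Equil` the unique
equilibrium state map, `Cob` the set of coboundaries, `μL` the Liouville measure
(equilibrium state of `−J^u` with `P(−J^u) = 0`). -/
theorem stmt_14 {S I : Type*} [Nonempty I]
    (ent : I → ℝ) (integ : I → (S → ℝ) → ℝ)
    (hadd : ∀ (μ : I) (f g : S → ℝ),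
      integ μ (fun z => f z + g z) = integ μ f + integ μ g)
    (hconst : ∀ (μ : I) (c : ℝ), integ μ (fun _ => c) = c)
    (hnegi : ∀ (μ : I) (f : S → ℝ), integ μ (fun z => -f z) = -integ μ f)
    (Cob : Set (S → ℝ))
    (hCob0 : ∀ (μ : I), ∀ u ∈ Cob, integ μ u = 0)
    (hCobNeg : ∀ u ∈ Cob, (fun z => -u z) ∈ Cob)
    (Pr : (S → ℝ) → ℝ)
    (hPr : ∀ f : S → ℝ, Pr f = sSup (Set.range fun μ : I => ent μ + integ μ f))
    (Equil : (S → ℝ) → I)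
    (hEqAtt : ∀ f, ent (Equil f) + integ (Equil f) f = Pr f)
    (hEqBound : ∀ f (μ : I), ent μ + integ μ f ≤ Pr f)
    (hEqUniq : ∀ f (μ : I), ent μ + integ μ f = Pr f → μ = Equil f)
    (hEqCohom : ∀ f f' : S → ℝ,
      Equil f = Equil f' ↔ ∃ c : ℝ, (fun z => f z - f' z - c) ∈ Cob)
    (Ju a : S → ℝ) (μL : I)
    (hμL : Equil (fun z => -Ju z) = μL)
    (hP0 : Pr (fun z => -Ju z) = 0) :
    0 ≤ Pr (fun z => -Ju z - a z + integ μL a) ∧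
      (Pr (fun z => -Ju z - a z + integ μL a) = 0 ↔
        ∃ c : ℝ, (fun z => a z - c) ∈ Cob) := by
  set C := integ μL a with hC
  have key : integ μL (fun z => -Ju z - a z + C) = integ μL (fun z => -Ju z) := by
    have h1 : (fun z => -Ju z - a z + C) = fun z => (fun z => -Ju z) z + (fun z => -a z + C) z := by
      funext z; ring
    rw [h1, hadd, hadd, hnegi, hnegi, hconst, hC]; ring
  have hμLval : ent μL + integ μL (fun z => -Ju z - a z + C) = 0 := by
    rw [key, ← hμL, hEqAtt, hP0]
  constructor
  · have := hEqBound (fun z => -Ju z - a z + C) μL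
    linarith
  · constructor
    · intro h0
      have hμeq : μL = Equil (fun z => -Ju z - a z + C) :=
        hEqUniq _ μL (by rw [h0]; exact hμLval)
      have hEq : Equil (fun z => -Ju z) = Equil (fun z => -Ju z - a z + C) := by
        rw [hμL]; exact hμeq
      obtain ⟨c, hc⟩ := (hEqCohom _ _).mp hEq.symm
      refine ⟨C - c, ?_⟩
      have : (fun z => a z - (C - c)) = fun z => -((fun z => (-Ju z - a z + C) - (-Ju z) - c) z) := by
        funext z; ring
      rw [this]
      exact hCobNeg _ hc
    · intro ⟨c, hc⟩
      have hEq : Equil (fun z => -Ju z) = Equil (fun z => -Ju z - a z + C) := by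
        rw [hEqCohom]
        refine ⟨c - C, ?_⟩
        have : (fun z => (-Ju z) - (-Ju z - a z + C) - (c - C)) = fun z => a z - c := by
          funext z; ring
        rw [this]; exact hc
      have := hEqAtt (fun z => -Ju z - a z + C)
      rw [← hEq, hμL] at this
      linarith [hμLval, this]
end

section
/- The asymmetric Thurston distance dominates comparison along paths: for any C¹ path γ : [0,1] → E of metrics with γ(0) = g_1, γ(1) = g_2, one has d_T(g_1,g_2) ≤ ∫_0^1 ‖γ̇(t)‖_T dt, where ‖·‖_T is the Finsler norm ‖f‖_T = (1/2) sup_{m ergodic} ∫ π_2^*f dm and d_T satisfies the triangle inequality and the first-order expansion d_T(γ(t_i), γ(t_{i+1})) = ‖γ̇(t_i)‖_T (t_{i+1} − t_i) + O(|t_{i+1}−t_i|²). Hence d_T ≤ d_F, the induced Finsler path distance. -/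
/-!
Cut `[0,1]` into `n` equal pieces. The triangle inequality and the first-order expansion bound
`d_T(γ 0, γ 1)` by the left Riemann sum of `N` plus `n · C/n² = C/n`. Since `N` is uniformly
continuous on `[0,1]`, these Riemann sums converge to `∫₀¹ N`, and `C/n → 0`.
-/

open MeasureTheory Filter Finset Set Topology

section RiemannSum

variable {E : Type*} [NormedAddCommGroup E] [NormedSpace ℝ E]

noncomputable def leftRiemannSum (f : ℝ → E) (a b : ℝ) (n : ℕ) : E :=
  ∑ i ∈ range n, ((b - a) / n) • f (a + i * ((b - a) / n))

variable [CompleteSpace E]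

theorem norm_sum_smul_sub_intervalIntegral_le {f : ℝ → E} {x : ℕ → ℝ} {n : ℕ} {η : ℝ}
    (hx : ∀ i < n, x i ≤ x (i + 1))
    (hf : ∀ i < n, IntervalIntegrable f volume (x i) (x (i + 1)))
    (hη : ∀ i < n, ∀ t ∈ Icc (x i) (x (i + 1)), ‖f t - f (x i)‖ ≤ η) :
    ‖∑ i ∈ range n, (x (i + 1) - x i) • f (x i) - ∫ t in x 0..x n, f t‖ ≤ η * (x n - x 0) := by
  rw [← intervalIntegral.sum_integral_adjacent_intervals hf, ← sum_sub_distrib,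
    ← sum_range_sub x, mul_sum]
  refine (norm_sum_le _ _).trans (sum_le_sum fun i hi => ?_)
  replace hi := mem_range.1 hi
  have hsub : (x (i + 1) - x i) • f (x i) - ∫ t in x i..x (i + 1), f t =
      -∫ t in x i..x (i + 1), (f t - f (x i)) := by
    rw [intervalIntegral.integral_sub (hf i hi) intervalIntegrable_const,
      intervalIntegral.integral_const]
    abel
  rw [hsub, norm_neg, ← abs_of_nonneg (sub_nonneg.2 (hx i hi))]
  refine intervalIntegral.norm_integral_le_of_norm_le_const fun t ht => hη i hi t ?_
  rw [uIoc_of_le (hx i hi)] at ht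
  exact Ioc_subset_Icc_self ht

theorem norm_leftRiemannSum_sub_intervalIntegral_le {f : ℝ → E} {a b η : ℝ} {n : ℕ}
    (hab : a ≤ b) (hn : 0 < n) (hf : ContinuousOn f (Icc a b))
    (hη : ∀ s ∈ Icc a b, ∀ t ∈ Icc a b, dist t s ≤ (b - a) / n → ‖f t - f s‖ ≤ η) :
    ‖leftRiemannSum f a b n - ∫ t in a..b, f t‖ ≤ η * (b - a) := by
  have hn0 : (0 : ℝ) < n := by exact_mod_cast hn
  set h := (b - a) / n
  have hh : 0 ≤ h := div_nonneg (sub_nonneg.2 hab) hn0.le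
  set x : ℕ → ℝ := fun i => a + i * h
  have hstep : ∀ i, x (i + 1) - x i = h := fun i => by simp only [x]; push_cast; ring
  have hx0 : x 0 = a := by simp [x]
  have hxn : x n = b := by simp only [x, h]; field_simp; ring
  have hmono : Monotone x := fun j k hjk => by
    simp only [x]
    gcongr
  have hmem : ∀ i < n, Icc (x i) (x (i + 1)) ⊆ Icc a b := fun i hi =>
    Icc_subset_Icc (hx0 ▸ hmono (Nat.zero_le i)) (hxn ▸ hmono hi)
  have hbound := norm_sum_smul_sub_intervalIntegral_le (f := f) (x := x) (n := n) (η := η)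
    (fun i _ => by linarith [hstep i])
    (fun i hi => (hf.mono (hmem i hi)).intervalIntegrable_of_Icc (by linarith [hstep i]))
    (fun i hi t ht => hη (x i) (hmem i hi ⟨le_rfl, by linarith [hstep i]⟩) t (hmem i hi ht) (by
      rw [Real.dist_eq, abs_of_nonneg (by linarith [ht.1])]
      linarith [ht.2, hstep i]))
  simp only [hstep, hx0, hxn] at hbound
  exact hbound

theorem tendsto_leftRiemannSum {f : ℝ → E} {a b : ℝ} (hab : a ≤ b)
    (hf : ContinuousOn f (Icc a b)) :
    Tendsto (leftRiemannSum f a b) atTop (𝓝 (∫ t in a..b, f t)) := by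
  rw [Metric.tendsto_atTop]
  intro ε hε
  set η := ε / (b - a + 1)
  have hη : 0 < η := div_pos hε (by linarith)
  obtain ⟨δ, hδ, hfδ⟩ := Metric.uniformContinuousOn_iff.1
    (isCompact_Icc.uniformContinuousOn_of_continuous hf) η hη
  obtain ⟨m, hm⟩ := exists_nat_gt ((b - a) / δ)
  refine ⟨m + 1, fun n hn => ?_⟩
  have hn0 : (0 : ℝ) < n := by exact_mod_cast (Nat.succ_pos m).trans_le hn
  have hmesh : (b - a) / n < δ := by
    rw [div_lt_iff₀ hn0]
    rw [div_lt_iff₀ hδ] at hm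
    have : (m : ℝ) + 1 ≤ n := by exact_mod_cast hn
    nlinarith
  have hclose := norm_leftRiemannSum_sub_intervalIntegral_le (η := η) hab
    ((Nat.succ_pos m).trans_le hn) hf fun s hs t ht hst =>
      (dist_eq_norm (f t) (f s) ▸ hfδ t ht s hs (hst.trans_lt hmesh)).le
  rw [dist_eq_norm]
  refine hclose.trans_lt ?_
  rw [div_mul_eq_mul_div, div_lt_iff₀ (by linarith)]
  nlinarith

end RiemannSum

theorem le_sum_range_of_triangle {X : Type*} {d : X → X → ℝ}
    (htri : ∀ a b c, d a c ≤ d a b + d b c) (x : ℕ → X) {n : ℕ} (hn : 0 < n) :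
    d (x 0) (x n) ≤ ∑ i ∈ range n, d (x i) (x (i + 1)) := by
  induction n, hn using Nat.le_induction with
  | base => simp
  | succ n _ ih =>
    rw [sum_range_succ]
    exact (htri _ (x n) _).trans (by linarith)

theorem le_leftRiemannSum_add_div_of_le_mul_add_sq {X : Type*} {γ : ℝ → X} {d : X → X → ℝ}
    {N : ℝ → ℝ} {C : ℝ} (htri : ∀ a b c, d a c ≤ d a b + d b c)
    (hexp : ∀ t s : ℝ, 0 ≤ t → t ≤ s → s ≤ 1 → d (γ t) (γ s) ≤ N t * (s - t) + C * (s - t) ^ 2)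
    {n : ℕ} (hn : 0 < n) :
    d (γ 0) (γ 1) ≤ leftRiemannSum N 0 1 n + C / n := by
  have hn' : (0 : ℝ) < n := by exact_mod_cast hn
  set x : ℕ → ℝ := fun i => i * (1 / n)
  have hstep : ∀ i, x (i + 1) - x i = 1 / n := fun i => by simp only [x]; push_cast; ring
  have hmem : ∀ i < n, 0 ≤ x i ∧ x (i + 1) ≤ 1 := fun i hi =>
    ⟨by positivity, by
      rw [show x (i + 1) = (i + 1 : ℕ) / n by simp only [x, mul_one_div], div_le_one hn']
      exact_mod_cast hi⟩
  have hpiece : ∀ i < n, d (γ (x i)) (γ (x (i + 1))) ≤ N (x i) * (1 / n) + C * (1 / n) ^ 2 :=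
    fun i hi => hstep i ▸ hexp _ _ (hmem i hi).1 (by linarith [hstep i, one_div_pos.2 hn'])
      (hmem i hi).2
  calc d (γ 0) (γ 1) = d (γ (x 0)) (γ (x n)) := by simp [x, hn'.ne']
    _ ≤ ∑ i ∈ range n, d (γ (x i)) (γ (x (i + 1))) := le_sum_range_of_triangle htri (γ ∘ x) hn
    _ ≤ ∑ i ∈ range n, (N (x i) * (1 / n) + C * (1 / n) ^ 2) :=
      sum_le_sum fun i hi => hpiece i (mem_range.1 hi)
    _ = ∑ i ∈ range n, (1 / n : ℝ) • N (x i) + C / n := by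
      rw [sum_add_distrib, sum_const, card_range, nsmul_eq_mul]
      congr 1
      · exact sum_congr rfl fun i _ => by rw [smul_eq_mul, mul_comm]
      · field_simp
    _ = leftRiemannSum N 0 1 n + C / n := by simp only [leftRiemannSum, sub_zero, zero_add, x]

/-- the Thurston asymmetric distance is dominated by the Finsler
length of any C¹ path: if `d_T` satisfies the triangle inequality and the
first-order expansion `d_T(γ(t),γ(s)) ≤ N(t)(s−t) + C(s−t)²` with `N(t) = ‖γ̇(t)‖_T`
continuous, then `d_T(γ(0),γ(1)) ≤ ∫₀¹ ‖γ̇(t)‖_T dt`; hence `d_T ≤ d_F`. -/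
theorem stmt_18 {X : Type*} (γ : ℝ → X) (dT : X → X → ℝ) (N : ℝ → ℝ)
    (htri : ∀ a b c : X, dT a c ≤ dT a b + dT b c)
    (hNcont : ContinuousOn N (Set.Icc 0 1))
    (C : ℝ)
    (hexp : ∀ t s : ℝ, 0 ≤ t → t ≤ s → s ≤ 1 →
      dT (γ t) (γ s) ≤ N t * (s - t) + C * (s - t) ^ 2) :
    dT (γ 0) (γ 1) ≤ ∫ t in (0:ℝ)..1, N t := by
  have hlim := (tendsto_leftRiemannSum zero_le_one hNcont).add
    (tendsto_const_div_atTop_nhds_zero_nat C)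
  rw [add_zero] at hlim
  exact ge_of_tendsto hlim (eventually_atTop.2
    ⟨1, fun _ hn => le_leftRiemannSum_add_div_of_le_mul_add_sq htri hexp hn⟩)
end
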